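/- The groupwise density number is at most the cofinality of the continuum: 𝔤 ≤ cof(𝔠), where 𝔤 is the least size of a family of groupwise dense subsets of [ω]^ℵ₀ with empty intersection. -/

import Mathlib

/-- `a ⊆* b`: `a \ b` is finite. -/
def almostSubset (a b : Set ℕ) : Prop := (a \ b).Finite

/-- `D` is a groupwise dense family of infinite subsets of `ω`. -/
def GroupwiseDense (D : Set (Set ℕ)) : Prop :=
  (∀ a ∈ D, Set.Infinite a) ∧
  (∀ a b : Set ℕ, a.Infinite → almostSubset a b → b ∈ D → a ∈ D) ∧
  (∀ I : ℕ → ℕ, StrictMono I → I 0 = 0 →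
    ∃ a : Set ℕ, a.Infinite ∧ (⋃ n ∈ a, Set.Ico (I n) (I (n + 1))) ∈ D)

/-- The groupwise density number `𝔤`. -/
noncomputable def gNum : Cardinal :=
  sInf {c | ∃ 𝒟 : Set (Set (Set ℕ)), Cardinal.mk 𝒟 = c ∧
    (∀ D ∈ 𝒟, GroupwiseDense D) ∧ ⋂₀ 𝒟 = ∅}

open Cardinal Set

/-! ### An almost disjoint family of size continuum -/

noncomputable def phiB (r : ℕ → Bool) : Set ℕ :=
  Set.range fun n => Encodable.encode (List.ofFn fun i : Fin n => r i)

lemma phiB_infinite (r : ℕ → Bool) : (phiB r).Infinite := by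
  apply Set.infinite_range_of_injective
  intro m n h
  have h2 : (List.ofFn fun i : Fin m => r i) = (List.ofFn fun i : Fin n => r i) :=
    Encodable.encode_injective h
  have := congrArg List.length h2
  simpa using this

lemma phiB_almostDisjoint {r s : ℕ → Bool} (h : r ≠ s) : (phiB r ∩ phiB s).Finite := by
  obtain ⟨m, hm⟩ : ∃ m, r m ≠ s m := by
    by_contra hc; push_neg at hc; exact h (funext hc)
  have hsub : phiB r ∩ phiB s ⊆
      (fun n => Encodable.encode (List.ofFn fun i : Fin n => r i)) '' (Set.Iic m) := by
    rintro k ⟨⟨n, rfl⟩, ⟨n', hn'⟩⟩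
    refine ⟨n, ?_, rfl⟩
    by_contra hn
    simp only [Set.mem_Iic, not_le] at hn
    have hl : (List.ofFn fun i : Fin n' => s i) = (List.ofFn fun i : Fin n => r i) :=
      Encodable.encode_injective hn'
    have hlen : n' = n := by simpa using congrArg List.length hl
    subst hlen
    have hb : m < (List.ofFn fun i : Fin n' => s i).length := by simpa using hn
    have hb' : m < (List.ofFn fun i : Fin n' => r i).length := by simpa using hn
    have : (List.ofFn fun i : Fin n' => s i)[m]'hb = (List.ofFn fun i : Fin n' => r i)[m]'hb' := by
      simp only [hl]
    rw [List.getElem_ofFn, List.getElem_ofFn] at this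
    exact hm this.symm
  exact (Set.Finite.image _ (Set.finite_Iic m)).subset hsub

lemma mk_nat_bool : #(ℕ → Bool) = continuum := by
  rw [← Cardinal.two_power_aleph0]
  simp [Cardinal.mk_arrow]

/-- Given fewer than continuum many infinite sets, there is an infinite set `a`
such that every member of the family has infinite difference with `a`. -/
lemma exists_unsplit (Y : Set (Set ℕ)) (hY : #Y < continuum)
    (hinf : ∀ y ∈ Y, y.Infinite) :
    ∃ a : Set ℕ, a.Infinite ∧ ∀ y ∈ Y, (y \ a).Infinite := by
  by_contra hc
  push_neg at hc
  have choice : ∀ r : ℕ → Bool, ∃ y : Y, ((y : Set ℕ) \ phiB r).Finite := by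
    intro r
    obtain ⟨y, hy, hfin⟩ := hc (phiB r) (phiB_infinite r)
    exact ⟨⟨y, hy⟩, hfin⟩
  choose f hf using choice
  have hninj : ¬ Function.Injective f := by
    intro hinj
    have : continuum ≤ #Y := mk_nat_bool ▸ Cardinal.mk_le_of_injective hinj
    exact absurd this (not_le.mpr hY)
  simp only [Function.Injective, not_forall] at hninj
  obtain ⟨r, s, hfr, hrs⟩ := hninj
  set y := f r with hy
  have h1 : ((y : Set ℕ) \ phiB r).Finite := hf r
  have h2 : ((y : Set ℕ) \ phiB s).Finite := hfr ▸ hf s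
  have h3 : (phiB r ∩ phiB s).Finite := phiB_almostDisjoint hrs
  have hyfin : (y : Set ℕ).Finite := by
    have hsub : (y : Set ℕ) ⊆
        ((y : Set ℕ) \ phiB r) ∪ ((y : Set ℕ) \ phiB s) ∪ (phiB r ∩ phiB s) := by
      intro k hk
      by_cases hr : k ∈ phiB r
      · by_cases hs : k ∈ phiB s
        · exact Or.inr ⟨hr, hs⟩
        · exact Or.inl (Or.inr ⟨hk, hs⟩)
      · exact Or.inl (Or.inl ⟨hk, hr⟩)
    exact ((h1.union h2).union h3).subset hsub
  exact hinf y y.2 hyfin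

/-! ### Interval partitions -/

section
variable {I : ℕ → ℕ}

lemma exists_block (hI : StrictMono I) (hI0 : I 0 = 0) (k : ℕ) :
    ∃ n, I n ≤ k ∧ k < I (n + 1) := by
  classical
  have hex : ∃ m, k < I m := ⟨k + 1, lt_of_lt_of_le (Nat.lt_succ_self k) hI.le_apply⟩
  have hm : k < I (Nat.find hex) := Nat.find_spec hex
  have h0 : Nat.find hex ≠ 0 := by
    intro h
    rw [h, hI0] at hm
    omega
  obtain ⟨n, hn⟩ := Nat.exists_eq_succ_of_ne_zero h0
  refine ⟨n, ?_, ?_⟩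
  · have := Nat.find_min hex (m := n) (by omega)
    omega
  · have : n + 1 = Nat.find hex := by omega
    rw [this]; exact hm

lemma block_unique (hI : StrictMono I) {n m k : ℕ}
    (hn1 : I n ≤ k) (hn2 : k < I (n+1)) (hm1 : I m ≤ k) (hm2 : k < I (m+1)) : n = m := by
  by_contra h
  rcases Nat.lt_or_ge n m with hlt | hge
  · exact absurd (le_trans (hI.monotone hlt) hm1) (not_le.mpr hn2)
  · have hlt : m < n := lt_of_le_of_ne hge fun e => h e.symm
    exact absurd (le_trans (hI.monotone hlt) hn1) (not_le.mpr hm2)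

/-- indices of blocks met by `x` -/
def bIdx (I : ℕ → ℕ) (x : Set ℕ) : Set ℕ := {n | (x ∩ Set.Ico (I n) (I (n+1))).Nonempty}

lemma bIdx_infinite (hI : StrictMono I) (hI0 : I 0 = 0) {x : Set ℕ} (hx : x.Infinite) :
    (bIdx I x).Infinite := by
  intro hfin
  apply hx
  have hsub : x ⊆ ⋃ n ∈ bIdx I x, Set.Ico (I n) (I (n+1)) := by
    intro k hk
    obtain ⟨n, h1, h2⟩ := exists_block hI hI0 k
    exact Set.mem_biUnion ⟨k, hk, h1, h2⟩ ⟨h1, h2⟩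
  exact (Set.Finite.biUnion hfin fun n _ => Set.finite_Ico _ _).subset hsub

lemma diff_union_infinite (hI : StrictMono I) {x a : Set ℕ}
    (hb : (bIdx I x \ a).Infinite) :
    (x \ ⋃ n ∈ a, Set.Ico (I n) (I (n+1))).Infinite := by
  classical
  have hch : ∀ n : (bIdx I x \ a : Set ℕ), ∃ k, k ∈ x ∩ Set.Ico (I n) (I (n+1)) := fun n => n.2.1
  choose g hg using hch
  have : Infinite ↥(bIdx I x \ a) := hb.to_subtype
  refine Set.infinite_of_injective_forall_mem (f := g) ?_ ?_
  · intro n m hnm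
    have h1 := (hg n).2
    have h2 := (hg m).2
    rw [hnm] at h1
    exact Subtype.ext (block_unique hI h1.1 h1.2 h2.1 h2.2)
  · intro n
    refine ⟨(hg n).1, ?_⟩
    intro hmem
    simp only [Set.mem_iUnion] at hmem
    obtain ⟨m, hm, hk1, hk2⟩ := hmem
    have := block_unique hI (hg n).2.1 (hg n).2.2 hk1 hk2
    exact n.2.2 (this ▸ hm)

end

/-! ### The groupwise dense sets `DX` -/

/-- Infinite sets that do not almost-contain any member of `X`. -/
def DX (X : Set (Set ℕ)) : Set (Set ℕ) :=
  {a | a.Infinite ∧ ∀ x ∈ X, (x \ a).Infinite}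

lemma DX_groupwiseDense {X : Set (Set ℕ)} (hX : #X < continuum)
    (hXinf : ∀ x ∈ X, x.Infinite) : GroupwiseDense (DX X) := by
  refine ⟨fun a ha => ha.1, ?_, ?_⟩
  · rintro a b hainf hab ⟨_, hb⟩
    refine ⟨hainf, fun x hx => ?_⟩
    have h1 : ((x \ b) \ (a \ b)).Infinite := (hb x hx).diff hab
    refine h1.mono fun k hk => ?_
    rcases hk with ⟨⟨hkx, hkb⟩, hkab⟩
    exact ⟨hkx, fun hka => hkab ⟨hka, hkb⟩⟩
  · intro I hI hI0
    have hYcard : #(bIdx I '' X) < continuum := lt_of_le_of_lt (Cardinal.mk_image_le) hX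
    have hYinf : ∀ y ∈ bIdx I '' X, y.Infinite := by
      rintro y ⟨x, hx, rfl⟩
      exact bIdx_infinite hI hI0 (hXinf x hx)
    obtain ⟨a, ha, hsplit⟩ := exists_unsplit _ hYcard hYinf
    refine ⟨a, ha, ?_, ?_⟩
    · have hsub : I '' a ⊆ ⋃ n ∈ a, Set.Ico (I n) (I (n+1)) := by
        rintro k ⟨n, hn, rfl⟩
        exact Set.mem_biUnion hn ⟨le_refl _, hI (Nat.lt_succ_self n)⟩
      exact (ha.image (hI.injective.injOn)).mono hsub
    · intro x hx
      exact diff_union_infinite hI (hsplit _ (Set.mem_image_of_mem _ hx))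

/-! ### Cardinality facts -/

lemma mk_infinite_sets : #{a : Set ℕ // a.Infinite} = continuum := by
  have h1 : #{a : Set ℕ // a.Finite} ≤ ℵ₀ :=
    (Set.Countable.setOf_finite (α := ℕ)).le_aleph0
  have h2 : #{a : Set ℕ | a.Infinite} + #({a : Set ℕ | a.Infinite}ᶜ : Set (Set ℕ)) = #(Set ℕ) :=
    Cardinal.mk_sum_compl _
  have hcompl : ({a : Set ℕ | a.Infinite}ᶜ : Set (Set ℕ)) = {a : Set ℕ | a.Finite} := by
    ext a; simp [Set.not_infinite]
  rw [hcompl, Cardinal.mk_set_nat] at h2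
  by_contra h
  rcases lt_or_gt_of_ne h with hlt | hgt
  · have : #{a : Set ℕ | a.Infinite} + #{a : Set ℕ | a.Finite} < continuum :=
      Cardinal.add_lt_of_lt Cardinal.aleph0_le_continuum hlt
        (lt_of_le_of_lt h1 Cardinal.aleph0_lt_continuum)
    rw [h2] at this; exact lt_irrefl _ this
  · have : #{a : Set ℕ | a.Infinite} ≤ continuum := by
      calc #{a : Set ℕ | a.Infinite} ≤ #(Set ℕ) := Cardinal.mk_set_le _
        _ = continuum := Cardinal.mk_set_nat
    exact absurd this (not_le.mpr hgt)

/-- `𝔤 ≤ cof(𝔠)`. -/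
theorem gNum_le_cof_continuum : gNum ≤ Cardinal.continuum.ord.cof := by
  classical
  -- enumerate the infinite subsets of ℕ by `continuum.ord.ToType`
  have hmk : #{a : Set ℕ // a.Infinite} = #(continuum.ord.ToType) := by
    rw [mk_infinite_sets, Cardinal.mk_toType, Cardinal.card_ord]
  obtain ⟨g⟩ := Cardinal.eq.mp hmk
  -- a cofinal set `S` of size `cof`
  obtain ⟨S, hSU', hScard⟩ := Order.exists_cof_eq continuum.{0}.ord.ToType
  have hSU : ∀ x, ∃ y ∈ S, ¬ y < x := fun x => (hSU' x).imp fun y hy => ⟨hy.1, not_lt.mpr hy.2⟩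
  rw [Ordinal.cof_toType] at hScard
  -- the initial segments
  set Xs : continuum.ord.ToType → Set (Set ℕ) :=
    fun s => {x : Set ℕ | ∃ h : x.Infinite, g ⟨x, h⟩ ≤ s} with hXs
  have hXsInf : ∀ s, ∀ x ∈ Xs s, x.Infinite := fun s x hx => hx.choose
  have hXsCard : ∀ s, #(Xs s) < continuum := by
    intro s
    have hinj : Function.Injective
        (fun x : Xs s => (⟨g ⟨x.1, x.2.choose⟩, x.2.choose_spec⟩ : Set.Iic s)) := by
      intro x y hxy
      have h5 : g ⟨x.1, x.2.choose⟩ = g ⟨y.1, y.2.choose⟩ := congrArg Subtype.val hxy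
      have h6 := g.injective h5
      exact Subtype.ext (congrArg (Subtype.val (p := Set.Infinite)) h6)
    have h1 : #(Xs s) ≤ #(Set.Iic s) := Cardinal.mk_le_of_injective hinj
    have h2 : #(Set.Iic s) ≤ #(Set.Iio s) + 1 := by
      rw [← Set.Iio_union_right]
      exact le_trans (Cardinal.mk_union_le _ _) (by rw [Cardinal.mk_singleton])
    have h3 : #(Set.Iio s) < continuum := Cardinal.mk_Iio_ord_toType s
    have h4 : #(Set.Iio s) + 1 < continuum :=
      Cardinal.add_lt_of_lt Cardinal.aleph0_le_continuum h3
        (lt_of_lt_of_le Cardinal.one_lt_aleph0 Cardinal.aleph0_le_continuum)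
    exact lt_of_le_of_lt (le_trans h1 h2) h4
  -- the family of groupwise dense sets
  set 𝒟 : Set (Set (Set ℕ)) := (fun s => DX (Xs s)) '' S with h𝒟
  have hmem : #(𝒟 : Set (Set (Set ℕ))) ∈ {c | ∃ 𝒟 : Set (Set (Set ℕ)), Cardinal.mk 𝒟 = c ∧
      (∀ D ∈ 𝒟, GroupwiseDense D) ∧ ⋂₀ 𝒟 = ∅} := by
    refine ⟨𝒟, rfl, ?_, ?_⟩
    · rintro D ⟨s, _, rfl⟩
      exact DX_groupwiseDense (hXsCard s) (hXsInf s)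
    · ext a
      simp only [Set.mem_sInter, Set.mem_empty_iff_false, iff_false, not_forall]
      by_cases hainf : a.Infinite
      · obtain ⟨s, hs, hns⟩ := hSU (g ⟨a, hainf⟩)
        refine ⟨DX (Xs s), ⟨s, hs, rfl⟩, ?_⟩
        intro hmem
        have : (a \ a).Infinite := hmem.2 a ⟨hainf, not_lt.mp hns⟩
        simp at this
      · have : Nonempty continuum.ord.ToType := by
          rw [Ordinal.toType_nonempty_iff_ne_zero]
          intro h
          exact Cardinal.continuum_ne_zero (by simpa using congrArg Ordinal.card h)
        obtain ⟨t⟩ := this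
        obtain ⟨s, hs, _⟩ := hSU t
        exact ⟨DX (Xs s), ⟨s, hs, rfl⟩, fun hmem => hainf hmem.1⟩
  have h1 : gNum ≤ #(𝒟 : Set (Set (Set ℕ))) := csInf_le' hmem
  have h2 : #(𝒟 : Set (Set (Set ℕ))) ≤ continuum.ord.cof := by
    rw [← hScard]
    exact Cardinal.mk_image_le
  exact le_trans h1 h2
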